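/- Let X be a finite connected graph and let Q be the simple random walk kernel with stationary measure π(x) = d_x / Σ_v d_v, and let θ be the logarithmic mean. Assume the global gradient estimate with constant κ > 0 holds: for all probability densities ρ ∈ D(X), all f : X → ℝ and all t ≥ 0, (1/2)·Σ_{u,v} (P_t f(v) − P_t f(u))² θ(ρ(u),ρ(v)) Q(u,v) π(u) ≤ e^{−2κt} · (1/2)·Σ_{u,v} (f(v) − f(u))² θ(P_t ρ(u), P_t ρ(v)) Q(u,v) π(u). Then the combinatorial diameter of X satisfies diam(X) ≤ (2/κ)·√(D·log D/(D − 1)), where D ≥ 2 is the maximal vertex degree. -/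

import Mathlib

/-!
Testing the gradient estimate against the density with mass `a` at a vertex `z` and `a / D` at
each neighbour of `z` bounds the carré du champ: `Γ(P_t f)(z) ≤ e^{-2κt} M` with
`M = D log D / (D - 1)` for every `1`-Lipschitz `f`. On the right-hand side the energy of `f` is
at most `1/2`, because the logarithmic mean lies below the arithmetic mean and `P_t` preserves
the mass of `ρ`. By Cauchy–Schwarz `|Δ P_t f| ≤ √Γ(P_t f) ≤ √M e^{-κt}`, so for `f = d(x, ·)` with
`d(x, y) = diam X` the function `t ↦ P_t f(y) - P_t f(x)` decreases at rate at most
`2 √M e^{-κt}`; the same gradient bound summed along a geodesic makes it tend to `0`. Integrating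
over `[0, ∞)` gives `diam X ≤ 2 √M / κ`.
-/

/-- The logarithmic mean: `θ(a,b) = (a-b)/(log a - log b)` for distinct positive `a,b`,
`θ(a,a) = a`, and `θ(a,b) = 0` when `a = 0` or `b = 0`. -/
noncomputable def logMean (a b : ℝ) : ℝ :=
  if a = 0 ∨ b = 0 then 0
  else if a = b then a
  else (a - b) / (Real.log a - Real.log b)

/-- The discrete Laplacian `Δf(x) = Σ_y (f(y)-f(x)) Q(x,y)`. -/
noncomputable def lap {X : Type*} [Fintype X] (Q : X → X → ℝ) (f : X → ℝ) (x : X) : ℝ :=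
  ∑ y, (f y - f x) * Q x y

/-- The heat semigroup `P_t = e^{tΔ}`, realized via the matrix exponential of `t•(Q - I)`.
(When `Σ_y Q(x,y) = 1`, the matrix `Q - I` acts on functions exactly as `Δ` does.) -/
noncomputable def heat {X : Type*} [Fintype X] [DecidableEq X] (Q : X → X → ℝ) (t : ℝ)
    (f : X → ℝ) : X → ℝ :=
  (NormedSpace.exp (t • (Matrix.of fun x y => Q x y - if x = y then (1 : ℝ) else 0))).mulVec f

/-- The carré du champ operator `Γ(f)(x) = Σ_y (f(y)-f(x))² Q(x,y)`. -/
noncomputable def gam {X : Type*} [Fintype X] (Q : X → X → ℝ) (f : X → ℝ) (x : X) : ℝ :=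
  ∑ y, (f y - f x) ^ 2 * Q x y

theorem two_mul_sub_one_div_add_one_le_log {r : ℝ} (hr : 1 < r) :
    2 * (r - 1) / (r + 1) ≤ Real.log r := by
  have hsum := Real.hasSum_log_one_add_inv (inv_pos.2 (sub_pos.2 hr))
  rw [inv_inv, add_sub_cancel] at hsum
  refine le_of_eq_of_le ?_ (le_hasSum hsum 0 fun k _ => by positivity)
  have : 2 * (r - 1)⁻¹ + 1 = (r + 1) / (r - 1) := by
    field_simp [(sub_pos.2 hr).ne']
    ring
  rw [this, one_div_div]
  norm_num
  ring

theorem logMean_comm (a b : ℝ) : logMean a b = logMean b a := by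
  unfold logMean
  rcases eq_or_ne a b with rfl | hab
  · rfl
  by_cases h0 : a = 0 ∨ b = 0
  · rw [if_pos h0, if_pos h0.symm]
  · rw [if_neg h0, if_neg (mt Or.symm h0), if_neg hab, if_neg hab.symm, ← neg_sub b a,
      ← neg_sub (Real.log b), neg_div_neg_eq]

theorem logMean_nonneg {a b : ℝ} (ha : 0 ≤ a) (hb : 0 ≤ b) : 0 ≤ logMean a b := by
  unfold logMean
  split_ifs with h0 hab
  · exact le_rfl
  · exact ha
  · push Not at h0
    have ha : 0 < a := ha.lt_of_ne' h0.1
    have hb : 0 < b := hb.lt_of_ne' h0.2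
    rcases lt_or_gt_of_ne hab with h | h
    · exact div_nonneg_of_nonpos (by linarith) (by linarith [Real.log_lt_log ha h])
    · exact div_nonneg (by linarith) (by linarith [Real.log_lt_log hb h])

theorem logMean_le_add_div_two {a b : ℝ} (ha : 0 ≤ a) (hb : 0 ≤ b) :
    logMean a b ≤ (a + b) / 2 := by
  wlog hba : b ≤ a generalizing a b
  · rw [logMean_comm, add_comm]
    exact this hb ha (le_of_not_ge hba)
  unfold logMean
  split_ifs with h0 hab
  · positivity
  · linarith
  push Not at h0
  have hb : 0 < b := hb.lt_of_ne' h0.2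
  have hr : 1 < a / b := (one_lt_div hb).2 (lt_of_le_of_ne hba (Ne.symm hab))
  have hlog : Real.log a - Real.log b = Real.log (a / b) := (Real.log_div h0.1 h0.2).symm
  rw [hlog, div_le_iff₀ (Real.log_pos hr)]
  calc a - b = (a + b) / 2 * (2 * (a / b - 1) / (a / b + 1)) := by field_simp
    _ ≤ (a + b) / 2 * Real.log (a / b) := by
      gcongr
      exact two_mul_sub_one_div_add_one_le_log hr

theorem logMean_self_div {a c : ℝ} (ha : 0 < a) (hc : 1 < c) :
    logMean a (a / c) = (a - a / c) / Real.log c := by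
  have hc0 : 0 < c := one_pos.trans hc
  have hne : a ≠ a / c := fun h => by
    rw [eq_div_iff hc0.ne'] at h
    nlinarith
  unfold logMean
  rw [if_neg (by simp [ha.ne', hc0.ne']), if_neg hne, Real.log_div ha.ne' hc0.ne', sub_sub_cancel]

open Filter Topology in
theorem le_div_of_hasDerivAt_of_tendsto_zero {φ φ' : ℝ → ℝ} {C κ : ℝ} (hκ : 0 < κ)
    (hφ : ∀ t, HasDerivAt φ (φ' t) t) (hφ' : ∀ t, 0 ≤ t → -(C * Real.exp (-κ * t)) ≤ φ' t)
    (hlim : Tendsto φ atTop (𝓝 0)) : φ 0 ≤ C / κ := by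
  -- `φ t - (C / κ) e^{-κ t}` is nondecreasing on `[0, ∞)` and tends to `0`
  set ψ := fun t => φ t - C / κ * Real.exp (-κ * t)
  have hψ : ∀ t, HasDerivAt ψ (φ' t + C * Real.exp (-κ * t)) t := fun t => by
    refine ((hφ t).sub (((hasDerivAt_id t).const_mul (-κ)).exp.const_mul (C / κ))).congr_deriv ?_
    simp only [id, mul_one]
    field_simp
    ring
  have hmono : MonotoneOn ψ (Set.Ici 0) :=
    monotoneOn_of_hasDerivWithinAt_nonneg (convex_Ici 0)
      (fun t _ => (hψ t).continuousAt.continuousWithinAt) (fun t _ => (hψ t).hasDerivWithinAt)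
      fun t ht => by
        rw [interior_Ici] at ht
        linarith [hφ' t (le_of_lt ht)]
  have hψlim : Tendsto ψ atTop (𝓝 0) := by
    have hexp : Tendsto (fun t => Real.exp (-κ * t)) atTop (𝓝 0) := by
      refine (Real.tendsto_exp_neg_atTop_nhds_zero.comp (tendsto_id.const_mul_atTop hκ)).congr
        fun t => ?_
      simp [neg_mul]
    convert hlim.sub (hexp.const_mul (C / κ)) using 2
    simp
  have := ge_of_tendsto hψlim ((eventually_ge_atTop 0).mono fun t ht =>
    hmono Set.self_mem_Ici ht ht)
  simpa [ψ] using this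

section HeatSemigroup

open Matrix

variable {X : Type*} [DecidableEq X]

def heatGenerator (Q : X → X → ℝ) : Matrix X X ℝ :=
  Matrix.of fun x y => Q x y - if x = y then 1 else 0

theorem heatGenerator_eq_sub_one (Q : X → X → ℝ) : heatGenerator Q = of Q - 1 := by
  ext i j
  simp [heatGenerator, one_apply]

variable [Fintype X] {Q : X → X → ℝ}

theorem heat_eq_exp_mulVec (Q : X → X → ℝ) (t : ℝ) (f : X → ℝ) :
    heat Q t f = NormedSpace.exp (t • heatGenerator Q) *ᵥ f :=
  rfl

@[simp]
theorem heat_zero (Q : X → X → ℝ) (f : X → ℝ) : heat Q 0 f = f := by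
  rw [heat_eq_exp_mulVec, zero_smul, NormedSpace.exp_zero, Matrix.one_mulVec]

theorem heatGenerator_mulVec (hrow : ∀ x, ∑ y, Q x y = 1) (g : X → ℝ) :
    heatGenerator Q *ᵥ g = lap Q g := by
  ext x
  simp only [heatGenerator, lap, Matrix.mulVec, dotProduct, Matrix.of_apply, sub_mul,
    Finset.sum_sub_distrib, ite_mul, one_mul, zero_mul, Finset.sum_ite_eq, Finset.mem_univ,
    if_true, ← Finset.mul_sum, hrow, mul_one, mul_comm (Q x _)]

theorem vecMul_heatGenerator {π : X → ℝ} (hπ : ∀ y, ∑ x, π x * Q x y = π y) :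
    π ᵥ* heatGenerator Q = 0 := by
  ext y
  simp only [heatGenerator, Matrix.vecMul, dotProduct, Matrix.of_apply, mul_sub,
    Finset.sum_sub_distrib, mul_ite, mul_one, mul_zero, Finset.sum_ite_eq', Finset.mem_univ,
    if_true, hπ, sub_self, Pi.zero_apply]

theorem hasDerivAt_heat (Q : X → X → ℝ) (f : X → ℝ) (t : ℝ) :
    HasDerivAt (fun s => heat Q s f) (heatGenerator Q *ᵥ heat Q t f) t := by
  let _ := Matrix.linftyOpNormedRing (n := X) (α := ℝ)
  let _ := Matrix.linftyOpNormedAlgebra (R := ℝ) (n := X) (α := ℝ)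
  let evalAt : Matrix X X ℝ →L[ℝ] X → ℝ := LinearMap.toContinuousLinearMap <|
    (LinearMap.applyₗ f).comp (Matrix.toLin' : Matrix X X ℝ ≃ₗ[ℝ] _).toLinearMap
  have h : HasDerivAt (fun s => heat Q s f)
      (evalAt (heatGenerator Q * NormedSpace.exp (t • heatGenerator Q))) t :=
    evalAt.hasFDerivAt.comp_hasDerivAt t (hasDerivAt_exp_smul_const' (heatGenerator Q) t)
  rwa [show evalAt _ = _ *ᵥ f from rfl, ← mulVec_mulVec] at h

theorem sum_heat_mul {π : X → ℝ} (hπ : ∀ y, ∑ x, π x * Q x y = π y) (ρ : X → ℝ) (t : ℝ) :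
    ∑ x, heat Q t ρ x * π x = ∑ x, ρ x * π x := by
  have hderiv : ∀ s, HasDerivAt (fun s => ∑ x, heat Q s ρ x * π x) 0 s := fun s => by
    have h := HasDerivAt.fun_sum fun x (_ : x ∈ Finset.univ) =>
      (hasDerivAt_pi.1 (hasDerivAt_heat Q ρ s) x).mul_const (π x)
    refine h.congr_deriv ?_
    change (heatGenerator Q *ᵥ heat Q s ρ) ⬝ᵥ π = 0
    rw [dotProduct_comm, Matrix.dotProduct_mulVec, vecMul_heatGenerator hπ,
      zero_dotProduct]
  have := is_const_of_deriv_eq_zero (fun s => (hderiv s).differentiableAt)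
    (fun s => (hderiv s).deriv) t 0
  simpa using this

theorem exp_apply_nonneg {B : Matrix X X ℝ} (hB : ∀ i j, 0 ≤ B i j) (i j : X) :
    0 ≤ NormedSpace.exp B i j := by
  let _ := Matrix.linftyOpNormedRing (n := X) (α := ℝ)
  let _ := Matrix.linftyOpNormedAlgebra (R := ℝ) (n := X) (α := ℝ)
  have h := Pi.hasSum.1 (Pi.hasSum.1 (NormedSpace.exp_series_hasSum_exp' (𝕂 := ℝ) B) i) j
  exact h.nonneg fun n => mul_nonneg (by positivity) (Matrix.pow_apply_nonneg hB n i j)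

theorem heat_nonneg (hQ : ∀ x y, 0 ≤ Q x y) {t : ℝ} (ht : 0 ≤ t) {ρ : X → ℝ}
    (hρ : ∀ x, 0 ≤ ρ x) (x : X) : 0 ≤ heat Q t ρ x := by
  have hexp : NormedSpace.exp (t • heatGenerator Q) =
      Real.exp (-t) • NormedSpace.exp (t • of Q) := by
    rw [heatGenerator_eq_sub_one, smul_sub, sub_eq_add_neg, ← neg_smul,
      Matrix.exp_add_of_commute _ _ ((Commute.one_right _).smul_right _),
      smul_one_eq_diagonal, exp_diagonal, Pi.exp_def, ← Real.exp_eq_exp_ℝ, ← smul_one_eq_diagonal,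
      mul_smul_one]
  rw [heat_eq_exp_mulVec, hexp]
  exact Finset.sum_nonneg fun y _ => mul_nonneg (mul_nonneg (Real.exp_pos _).le
    (exp_apply_nonneg (fun i j => mul_nonneg ht (hQ i j)) x y)) (hρ y)

end HeatSemigroup

theorem le_mul_mul_of_ne_zero {X : Type*} {Q : X → X → ℝ} {π : X → ℝ}
    (hπ : ∀ x, 0 < π x) (hdb : ∀ x y, π x * Q x y = π y * Q y x)
    {D : ℝ} (hD : 0 < D) (hmin : ∀ x y, Q x y ≠ 0 → D⁻¹ ≤ Q x y) {z v : X} (hzv : Q z v ≠ 0) :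
    π v ≤ D * (π z * Q z v) := by
  have hvz : Q v z ≠ 0 := fun h => by
    have := hdb z v
    simp [h, (hπ z).ne', hzv] at this
  have := mul_le_mul_of_nonneg_left (hmin v z hvz) (hπ v).le
  rw [hdb z v]
  field_simp at this ⊢
  linarith

section ReversibleMarkovKernel

variable {X : Type*} [Fintype X] {Q : X → X → ℝ} {π : X → ℝ}

noncomputable def logMeanEnergy (Q : X → X → ℝ) (π ρ g : X → ℝ) : ℝ :=
  (1 / 2) * ∑ u, ∑ v, (g v - g u) ^ 2 * logMean (ρ u) (ρ v) * Q u v * π u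

def GradientEstimate [DecidableEq X] (Q : X → X → ℝ) (π : X → ℝ) (κ : ℝ) : Prop :=
  ∀ ρ : X → ℝ, (∀ z, 0 ≤ ρ z) → ∑ z, ρ z * π z = 1 → ∀ f : X → ℝ, ∀ t : ℝ, 0 ≤ t →
    logMeanEnergy Q π ρ (heat Q t f) ≤ Real.exp (-2 * κ * t) * logMeanEnergy Q π (heat Q t ρ) f

theorem sum_mul_eq_of_detailed_balance (hrow : ∀ x, ∑ y, Q x y = 1)
    (hdb : ∀ x y, π x * Q x y = π y * Q y x) (y : X) : ∑ x, π x * Q x y = π y := by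
  simp only [hdb _ y, ← Finset.mul_sum, hrow, mul_one]

theorem lap_sq_le_gam (hQ : ∀ x y, 0 ≤ Q x y) (hrow : ∀ x, ∑ y, Q x y = 1) (g : X → ℝ)
    (x : X) : lap Q g x ^ 2 ≤ gam Q g x := by
  simpa [lap, gam, hrow] using Finset.sum_sq_le_sum_mul_sum_of_sq_le_mul Finset.univ
    (r := fun y => (g y - g x) * Q x y) (f := fun y => (g y - g x) ^ 2 * Q x y) (g := (Q x ·))
    (fun y _ => mul_nonneg (sq_nonneg _) (hQ x y)) (fun y _ => hQ x y) fun y _ => le_of_eq (by ring)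

theorem sq_sub_le_mul_gam (hQ : ∀ x y, 0 ≤ Q x y) {D : ℝ} (hD : 0 < D) {u v : X}
    (huv : D⁻¹ ≤ Q u v) (g : X → ℝ) : (g v - g u) ^ 2 ≤ D * gam Q g u :=
  calc (g v - g u) ^ 2 = D * ((g v - g u) ^ 2 * D⁻¹) := by field_simp
    _ ≤ D * ((g v - g u) ^ 2 * Q u v) := by gcongr
    _ ≤ D * gam Q g u := by
        gcongr
        exact Finset.single_le_sum (f := fun w => (g w - g u) ^ 2 * Q u w)
          (fun w _ => mul_nonneg (sq_nonneg _) (hQ u w)) (Finset.mem_univ v)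

theorem sum_sq_mul_logMean_le_logMeanEnergy (hQ : ∀ x y, 0 ≤ Q x y) (hπ : ∀ x, 0 ≤ π x)
    (hdb : ∀ x y, π x * Q x y = π y * Q y x) {ρ : X → ℝ} (hρ : ∀ x, 0 ≤ ρ x) (g : X → ℝ)
    (z : X) :
    ∑ v, (g v - g z) ^ 2 * logMean (ρ z) (ρ v) * Q z v * π z ≤ logMeanEnergy Q π ρ g := by
  classical
  set T : X → X → ℝ := fun u v => (g v - g u) ^ 2 * logMean (ρ u) (ρ v) * Q u v * π u
  have hT : ∀ u v, 0 ≤ T u v := fun u v =>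
    mul_nonneg (mul_nonneg (mul_nonneg (sq_nonneg _) (logMean_nonneg (hρ u) (hρ v))) (hQ u v))
      (hπ u)
  have hTsymm : ∀ u v, T u v = T v u := fun u v => by
    simp only [T, logMean_comm (ρ u), mul_assoc, mul_comm (Q u v), hdb u v]
    ring
  -- the row `u = z` and the column `v = z` of the double sum overlap only in `T z z = 0`
  calc ∑ v, T z v = (∑ v, T z v + ∑ u ∈ Finset.univ.erase z, T u z) / 2 := by
        rw [Finset.sum_erase _ (by simp [T]), ← Finset.sum_congr rfl fun u _ => hTsymm z u]
        ring
    _ ≤ (∑ v, T z v + ∑ u ∈ Finset.univ.erase z, ∑ v, T u v) / 2 := by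
        gcongr with u
        exact Finset.single_le_sum (fun v _ => hT u v) (Finset.mem_univ z)
    _ = logMeanEnergy Q π ρ g := by
        rw [Finset.add_sum_erase _ (fun u => ∑ v, T u v) (Finset.mem_univ z), logMeanEnergy]
        ring

theorem logMeanEnergy_le (hQ : ∀ x y, 0 ≤ Q x y) (hπ : ∀ x, 0 ≤ π x)
    (hrow : ∀ x, ∑ y, Q x y = 1) (hdb : ∀ x y, π x * Q x y = π y * Q y x) {ρ f : X → ℝ}
    (hρ : ∀ x, 0 ≤ ρ x) (hf : ∀ x y, Q x y ≠ 0 → |f y - f x| ≤ 1) :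
    logMeanEnergy Q π ρ f ≤ (∑ x, ρ x * π x) / 2 := by
  have hterm : ∀ u v, (f v - f u) ^ 2 * logMean (ρ u) (ρ v) * Q u v * π u ≤
      (ρ u * Q u v * π u + ρ v * Q u v * π u) / 2 := fun u v => by
    rcases eq_or_ne (Q u v) 0 with h | h
    · simp [h]
    have hf2 : (f v - f u) ^ 2 ≤ 1 := (sq_le_one_iff_abs_le_one _).2 (hf u v h)
    have hθ : (f v - f u) ^ 2 * logMean (ρ u) (ρ v) ≤ (ρ u + ρ v) / 2 :=
      calc _ ≤ 1 * logMean (ρ u) (ρ v) := by gcongr; exact logMean_nonneg (hρ u) (hρ v)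
        _ ≤ (ρ u + ρ v) / 2 := by linarith [logMean_le_add_div_two (hρ u) (hρ v)]
    have := mul_le_mul_of_nonneg_right hθ (mul_nonneg (hQ u v) (hπ u))
    linarith
  have hsum_left : ∑ u, ∑ v, ρ u * Q u v * π u = ∑ x, ρ x * π x :=
    Finset.sum_congr rfl fun u _ => by rw [← Finset.sum_mul, ← Finset.mul_sum, hrow, mul_one]
  have hsum_right : ∑ u, ∑ v, ρ v * Q u v * π u = ∑ x, ρ x * π x := by
    rw [Finset.sum_comm]
    refine Finset.sum_congr rfl fun v _ => ?_
    rw [← sum_mul_eq_of_detailed_balance hrow hdb v, Finset.mul_sum]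
    exact Finset.sum_congr rfl fun u _ => by ring
  calc logMeanEnergy Q π ρ f
      ≤ (1 / 2) * ∑ u, ∑ v, (ρ u * Q u v * π u + ρ v * Q u v * π u) / 2 :=
        mul_le_mul_of_nonneg_left
          (Finset.sum_le_sum fun u _ => Finset.sum_le_sum fun v _ => hterm u v) (by norm_num)
    _ = (∑ x, ρ x * π x) / 2 := by
        simp only [← Finset.sum_div, Finset.sum_add_distrib, hsum_left, hsum_right]
        ring

theorem GradientEstimate.sum_sq_mul_logMean_heat_le [DecidableEq X] {κ : ℝ}
    (hGE : GradientEstimate Q π κ) (hQ : ∀ x y, 0 ≤ Q x y) (hπ : ∀ x, 0 ≤ π x)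
    (hrow : ∀ x, ∑ y, Q x y = 1) (hdb : ∀ x y, π x * Q x y = π y * Q y x) {ρ f : X → ℝ}
    (hρ : ∀ x, 0 ≤ ρ x) (hρ1 : ∑ x, ρ x * π x = 1) (hf : ∀ x y, Q x y ≠ 0 → |f y - f x| ≤ 1)
    (z : X) {t : ℝ} (ht : 0 ≤ t) :
    ∑ v, (heat Q t f v - heat Q t f z) ^ 2 * logMean (ρ z) (ρ v) * Q z v * π z ≤
      Real.exp (-2 * κ * t) / 2 :=
  calc _ ≤ logMeanEnergy Q π ρ (heat Q t f) :=
        sum_sq_mul_logMean_le_logMeanEnergy hQ hπ hdb hρ _ z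
    _ ≤ Real.exp (-2 * κ * t) * logMeanEnergy Q π (heat Q t ρ) f := hGE ρ hρ hρ1 f t ht
    _ ≤ Real.exp (-2 * κ * t) * ((∑ x, heat Q t ρ x * π x) / 2) := by
        gcongr
        exact logMeanEnergy_le hQ hπ hrow hdb (heat_nonneg hQ ht hρ) hf
    _ = Real.exp (-2 * κ * t) / 2 := by
        rw [sum_heat_mul (sum_mul_eq_of_detailed_balance hrow hdb), hρ1]
        ring

theorem exists_density_inv_le_logMean_mul (hQ : ∀ x y, 0 ≤ Q x y) (hπ : ∀ x, 0 < π x)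
    (hrow : ∀ x, ∑ y, Q x y = 1) (hdb : ∀ x y, π x * Q x y = π y * Q y x) {D : ℝ} (hD : 1 < D)
    (hmin : ∀ x y, Q x y ≠ 0 → D⁻¹ ≤ Q x y) (z : X) :
    ∃ ρ : X → ℝ, (∀ x, 0 ≤ ρ x) ∧ ∑ x, ρ x * π x = 1 ∧
      ∀ v ≠ z, Q z v ≠ 0 → (2 * (D * Real.log D / (D - 1)))⁻¹ ≤ logMean (ρ z) (ρ v) * π z := by
  classical
  have hD0 : 0 < D := one_pos.trans hD
  set N := Finset.univ.filter fun v => v ≠ z ∧ Q z v ≠ 0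
  set B := ∑ v ∈ N, π v
  have hB : B ≤ D * π z := by
    calc B ≤ ∑ v ∈ N, D * (π z * Q z v) := Finset.sum_le_sum fun v hv =>
          le_mul_mul_of_ne_zero hπ hdb hD0 hmin (Finset.mem_filter.1 hv).2.2
      _ ≤ ∑ v, D * (π z * Q z v) := Finset.sum_le_sum_of_subset_of_nonneg (Finset.subset_univ _)
          fun v _ _ => mul_nonneg hD0.le (mul_nonneg (hπ z).le (hQ z v))
      _ = D * π z := by rw [← Finset.mul_sum, ← Finset.mul_sum, hrow, mul_one]
  have hden : 0 < π z + B / D :=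
    add_pos_of_pos_of_nonneg (hπ z) (div_nonneg (Finset.sum_nonneg fun v _ => (hπ v).le) hD0.le)
  set a := (π z + B / D)⁻¹
  have ha : 0 < a := inv_pos.2 hden
  refine ⟨fun v => a * ((if v = z then 1 else 0) + if v ∈ N then D⁻¹ else 0),
    fun v => mul_nonneg ha.le
      (add_nonneg (by split_ifs <;> norm_num) (by split_ifs <;> positivity)),
    ?_, fun v hv hzv => ?_⟩
  · calc ∑ v, a * ((if v = z then 1 else 0) + (if v ∈ N then D⁻¹ else 0)) * π v
        = a * (∑ v, (if v = z then π v else 0) + ∑ v, if v ∈ N then D⁻¹ * π v else 0) := by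
          rw [← Finset.sum_add_distrib, Finset.mul_sum]
          refine Finset.sum_congr rfl fun v _ => ?_
          split_ifs <;> ring
      _ = 1 := by
          rw [Finset.sum_ite_eq', Finset.sum_ite_mem, Finset.univ_inter, ← Finset.mul_sum,
            if_pos (Finset.mem_univ z), inv_mul_eq_div, ← div_eq_inv_mul, div_self hden.ne']
  · have hvN : v ∈ N := Finset.mem_filter.2 ⟨Finset.mem_univ v, hv, hzv⟩
    have hzN : z ∉ N := fun h => (Finset.mem_filter.1 h).2.1 rfl
    simp only [↓reduceIte, if_neg hzN, if_neg hv, if_pos hvN, add_zero, zero_add, mul_one,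
      ← div_eq_mul_inv]
    rw [logMean_self_div ha hD]
    have haπ : 1 / 2 ≤ a * π z := by
      rw [inv_mul_eq_div, le_div_iff₀ hden]
      linarith [(div_le_iff₀' hD0).2 hB]
    have hlog : 0 < Real.log D := Real.log_pos hD
    calc (2 * (D * Real.log D / (D - 1)))⁻¹ = 1 / 2 * ((D - 1) / (D * Real.log D)) := by
          field_simp
      _ ≤ a * π z * ((D - 1) / (D * Real.log D)) := by gcongr
      _ = (a - a / D) / Real.log D * π z := by field_simp

theorem GradientEstimate.gam_heat_le [DecidableEq X] {κ : ℝ} (hGE : GradientEstimate Q π κ)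
    (hQ : ∀ x y, 0 ≤ Q x y) (hπ : ∀ x, 0 < π x) (hrow : ∀ x, ∑ y, Q x y = 1)
    (hdb : ∀ x y, π x * Q x y = π y * Q y x) {D : ℝ} (hD : 1 < D)
    (hmin : ∀ x y, Q x y ≠ 0 → D⁻¹ ≤ Q x y) {f : X → ℝ}
    (hf : ∀ x y, Q x y ≠ 0 → |f y - f x| ≤ 1) (z : X) {t : ℝ} (ht : 0 ≤ t) :
    gam Q (heat Q t f) z ≤ Real.exp (-2 * κ * t) * (D * Real.log D / (D - 1)) := by
  obtain ⟨ρ, hρ, hρ1, hθ⟩ := exists_density_inv_le_logMean_mul hQ hπ hrow hdb hD hmin z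
  set M := D * Real.log D / (D - 1)
  have hM : 0 < M := div_pos (mul_pos (one_pos.trans hD) (Real.log_pos hD)) (by linarith)
  have hterm : ∀ v, (2 * M)⁻¹ * ((heat Q t f v - heat Q t f z) ^ 2 * Q z v) ≤
      (heat Q t f v - heat Q t f z) ^ 2 * logMean (ρ z) (ρ v) * Q z v * π z := fun v => by
    rcases eq_or_ne v z with rfl | hv
    · simp
    rcases eq_or_ne (Q z v) 0 with hzv | hzv
    · simp [hzv]
    calc _ = ((heat Q t f v - heat Q t f z) ^ 2 * Q z v) * (2 * M)⁻¹ := by ring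
      _ ≤ ((heat Q t f v - heat Q t f z) ^ 2 * Q z v) * (logMean (ρ z) (ρ v) * π z) :=
          mul_le_mul_of_nonneg_left (hθ v hv hzv) (mul_nonneg (sq_nonneg _) (hQ z v))
      _ = _ := by ring
  have hsum := (Finset.sum_le_sum fun v _ => hterm v).trans
    (hGE.sum_sq_mul_logMean_heat_le hQ (fun x => (hπ x).le) hrow hdb hρ hρ1 hf z ht)
  rw [← Finset.mul_sum, inv_mul_le_iff₀ (by positivity)] at hsum
  rw [gam]
  linarith

end ReversibleMarkovKernel

namespace SimpleGraph

variable {V : Type*} {G : SimpleGraph V}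

theorem Connected.abs_sub_le_dist_mul (hconn : G.Connected) {g : V → ℝ} {c : ℝ}
    (hg : ∀ u v, G.Adj u v → |g v - g u| ≤ c) (u v : V) : |g v - g u| ≤ G.dist u v * c := by
  obtain ⟨p, hp⟩ := hconn.exists_walk_length_eq_dist u v
  rw [← hp]
  clear hp
  induction p with
  | nil => simp
  | @cons a b w h q ih =>
    calc |g w - g a| ≤ |g w - g b| + |g b - g a| := abs_sub_le _ _ _
      _ ≤ q.length * c + c := add_le_add ih (hg a b h)
      _ = (Walk.cons h q).length * c := by rw [Walk.length_cons]; push_cast; ring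

theorem Connected.abs_dist_sub_dist_le_one (hconn : G.Connected) {v w : V} (h : G.Adj v w)
    (u : V) : |(G.dist u w : ℝ) - G.dist u v| ≤ 1 := by
  have h₁ := hconn.dist_triangle (u := u) (v := v) (w := w)
  have h₂ := hconn.dist_triangle (u := u) (v := w) (w := v)
  rw [dist_eq_one_iff_adj.2 h] at h₁
  rw [dist_eq_one_iff_adj.2 h.symm] at h₂
  rw [abs_le]
  constructor <;> linarith [(Nat.cast_le (α := ℝ)).2 h₁, (Nat.cast_le (α := ℝ)).2 h₂,
    Nat.cast_add_one (R := ℝ) (G.dist u v), Nat.cast_add_one (R := ℝ) (G.dist u w)]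

end SimpleGraph

section Diameter

open Filter Topology

variable {X : Type*} [Fintype X] [DecidableEq X] {Q : X → X → ℝ} {π : X → ℝ} {κ D : ℝ}

theorem GradientEstimate.abs_lap_heat_le (hGE : GradientEstimate Q π κ) (hQ : ∀ x y, 0 ≤ Q x y)
    (hπ : ∀ x, 0 < π x) (hrow : ∀ x, ∑ y, Q x y = 1) (hdb : ∀ x y, π x * Q x y = π y * Q y x)
    (hD : 1 < D) (hmin : ∀ x y, Q x y ≠ 0 → D⁻¹ ≤ Q x y) {f : X → ℝ}
    (hf : ∀ x y, Q x y ≠ 0 → |f y - f x| ≤ 1) (z : X) {t : ℝ} (ht : 0 ≤ t) :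
    |lap Q (heat Q t f) z| ≤ √(D * Real.log D / (D - 1)) * Real.exp (-κ * t) := by
  refine abs_le_of_sq_le_sq ?_ (by positivity)
  calc lap Q (heat Q t f) z ^ 2 ≤ gam Q (heat Q t f) z := lap_sq_le_gam hQ hrow _ z
    _ ≤ Real.exp (-2 * κ * t) * (D * Real.log D / (D - 1)) :=
        hGE.gam_heat_le hQ hπ hrow hdb hD hmin hf z ht
    _ = (√(D * Real.log D / (D - 1)) * Real.exp (-κ * t)) ^ 2 := by
        rw [mul_pow, Real.sq_sqrt (div_nonneg (mul_nonneg (by linarith) (Real.log_nonneg hD.le))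
          (by linarith)), ← Real.exp_nat_mul]
        ring_nf

theorem GradientEstimate.sub_le_of_tendsto (hGE : GradientEstimate Q π κ) (hκ : 0 < κ)
    (hQ : ∀ x y, 0 ≤ Q x y) (hπ : ∀ x, 0 < π x) (hrow : ∀ x, ∑ y, Q x y = 1)
    (hdb : ∀ x y, π x * Q x y = π y * Q y x) (hD : 1 < D) (hmin : ∀ x y, Q x y ≠ 0 → D⁻¹ ≤ Q x y)
    {f : X → ℝ} (hf : ∀ x y, Q x y ≠ 0 → |f y - f x| ≤ 1) {x y : X}
    (hlim : Tendsto (fun t => heat Q t f y - heat Q t f x) atTop (𝓝 0)) :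
    f y - f x ≤ 2 * √(D * Real.log D / (D - 1)) / κ := by
  have hderiv : ∀ t, HasDerivAt (fun t => heat Q t f y - heat Q t f x)
      (lap Q (heat Q t f) y - lap Q (heat Q t f) x) t := fun t => by
    have h := hasDerivAt_heat Q f t
    rw [heatGenerator_mulVec hrow] at h
    exact (hasDerivAt_pi.1 h y).sub (hasDerivAt_pi.1 h x)
  have hrate : ∀ t, 0 ≤ t → -(2 * √(D * Real.log D / (D - 1)) * Real.exp (-κ * t)) ≤
      lap Q (heat Q t f) y - lap Q (heat Q t f) x := fun t ht => by
    linarith [abs_le.1 (hGE.abs_lap_heat_le hQ hπ hrow hdb hD hmin hf y ht),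
      abs_le.1 (hGE.abs_lap_heat_le hQ hπ hrow hdb hD hmin hf x ht)]
  simpa using le_div_of_hasDerivAt_of_tendsto_zero hκ hderiv hrate hlim

theorem GradientEstimate.tendsto_heat_sub (hGE : GradientEstimate Q π κ) (hκ : 0 < κ)
    (hQ : ∀ x y, 0 ≤ Q x y) (hπ : ∀ x, 0 < π x) (hrow : ∀ x, ∑ y, Q x y = 1)
    (hdb : ∀ x y, π x * Q x y = π y * Q y x) (hD : 1 < D) (hmin : ∀ x y, Q x y ≠ 0 → D⁻¹ ≤ Q x y)
    {G : SimpleGraph X} (hconn : G.Connected) (hG : ∀ u v, G.Adj u v → D⁻¹ ≤ Q u v)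
    {f : X → ℝ} (hf : ∀ x y, Q x y ≠ 0 → |f y - f x| ≤ 1) (x y : X) :
    Tendsto (fun t => heat Q t f y - heat Q t f x) atTop (𝓝 0) := by
  set M := D * Real.log D / (D - 1)
  have hedge : ∀ t, 0 ≤ t → ∀ u v, G.Adj u v →
      |heat Q t f v - heat Q t f u| ≤ √(D * (Real.exp (-2 * κ * t) * M)) := fun t ht u v huv =>
    Real.abs_le_sqrt <| (sq_sub_le_mul_gam hQ (one_pos.trans hD) (hG u v huv) _).trans <|
      mul_le_mul_of_nonneg_left (hGE.gam_heat_le hQ hπ hrow hdb hD hmin hf u ht) (by linarith)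
  have hexp : Tendsto (fun t => Real.exp (-2 * κ * t)) atTop (𝓝 0) := by
    refine (Real.tendsto_exp_neg_atTop_nhds_zero.comp
      (tendsto_id.const_mul_atTop (by positivity : 0 < 2 * κ))).congr fun t => ?_
    simp [neg_mul]
  have hbound : Tendsto (fun t => G.dist x y * √(D * (Real.exp (-2 * κ * t) * M))) atTop (𝓝 0) := by
    simpa using ((hexp.mul_const M).const_mul D).sqrt.const_mul (G.dist x y : ℝ)
  refine squeeze_zero_norm' ?_ hbound
  filter_upwards [eventually_ge_atTop 0] with t ht
  exact hconn.abs_sub_le_dist_mul (hedge t ht) x y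

end Diameter

namespace SimpleGraph

variable {V : Type*} [Fintype V] (G : SimpleGraph V) [DecidableRel G.Adj]

noncomputable def randomWalk (x y : V) : ℝ :=
  if G.Adj x y then ((G.degree x : ℝ))⁻¹ else 0

noncomputable def degreeMeasure (x : V) : ℝ :=
  (G.degree x : ℝ) / ∑ v, (G.degree v : ℝ)

theorem randomWalk_nonneg (x y : V) : 0 ≤ G.randomWalk x y := by
  unfold randomWalk
  split_ifs <;> positivity

theorem adj_of_randomWalk_ne_zero {x y : V} (h : G.randomWalk x y ≠ 0) : G.Adj x y := by
  by_contra hxy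
  simp [randomWalk, hxy] at h

theorem inv_le_randomWalk {D : ℕ} (hD : ∀ x, G.degree x ≤ D) {x y : V} (h : G.Adj x y) :
    ((D : ℝ))⁻¹ ≤ G.randomWalk x y := by
  have : 0 < G.degree x := (G.degree_pos_iff_exists_adj x).2 ⟨y, h⟩
  rw [randomWalk, if_pos h]
  gcongr
  exact_mod_cast hD x

theorem sum_randomWalk {x : V} (hx : 0 < G.degree x) : ∑ y, G.randomWalk x y = 1 := by
  simp only [randomWalk, Finset.sum_ite, Finset.sum_const_zero, add_zero, Finset.sum_const,
    ← neighborFinset_eq_filter, card_neighborFinset_eq_degree, nsmul_eq_mul]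
  exact mul_inv_cancel₀ (by exact_mod_cast hx.ne')

theorem degreeMeasure_pos {x : V} (hx : 0 < G.degree x) : 0 < G.degreeMeasure x := by
  have hx' : (0 : ℝ) < G.degree x := by exact_mod_cast hx
  exact div_pos hx' (hx'.trans_le (Finset.single_le_sum (f := fun v => (G.degree v : ℝ))
    (fun v _ => by positivity) (Finset.mem_univ x)))

theorem degreeMeasure_mul_randomWalk (x y : V) :
    G.degreeMeasure x * G.randomWalk x y = G.degreeMeasure y * G.randomWalk y x := by
  unfold degreeMeasure randomWalk
  by_cases h : G.Adj x y
  · have hx : 0 < G.degree x := (G.degree_pos_iff_exists_adj x).2 ⟨y, h⟩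
    have hy : 0 < G.degree y := (G.degree_pos_iff_exists_adj y).2 ⟨x, h.symm⟩
    rw [if_pos h, if_pos h.symm]
    field_simp
  · rw [if_neg h, if_neg (fun h' => h h'.symm), mul_zero, mul_zero]

end SimpleGraph

/-- **Bonnet–Myers type diameter bound**: if the simple random walk on a finite connected
graph satisfies the global gradient estimate with constant `κ > 0` (i.e. has entropic
Ricci curvature at least `κ`), then `diam(X) ≤ (2/κ)·√(D·log D/(D-1))`. -/
theorem diameter_bound_entropic
    {X : Type*} [Fintype X] [DecidableEq X]
    (G : SimpleGraph X) [DecidableRel G.Adj] (hconn : G.Connected)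
    (Q : X → X → ℝ) (π : X → ℝ) (κ : ℝ) (hκ : 0 < κ)
    (hQ : ∀ x y, Q x y = if G.Adj x y then ((G.degree x : ℝ))⁻¹ else 0)
    (hπ : ∀ x, π x = (G.degree x : ℝ) / ∑ v, (G.degree v : ℝ))
    (D : ℕ) (hD : D = Finset.univ.sup fun x => G.degree x) (hD2 : 2 ≤ D)
    (hGE : ∀ ρ : X → ℝ, (∀ z, 0 ≤ ρ z) → ∑ z, ρ z * π z = 1 → ∀ f : X → ℝ, ∀ t : ℝ, 0 ≤ t →
      (1 / 2) * ∑ u, ∑ v,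
          (heat Q t f v - heat Q t f u) ^ 2 * logMean (ρ u) (ρ v) * Q u v * π u ≤
        Real.exp (-2 * κ * t) * ((1 / 2) * ∑ u, ∑ v,
          (f v - f u) ^ 2 * logMean (heat Q t ρ u) (heat Q t ρ v) * Q u v * π u)) :
    (G.diam : ℝ) ≤ (2 / κ) * Real.sqrt (D * Real.log D / ((D : ℝ) - 1)) := by
  obtain rfl : Q = G.randomWalk := funext₂ hQ
  obtain rfl : π = G.degreeMeasure := funext hπ
  replace hGE : GradientEstimate G.randomWalk G.degreeMeasure κ := hGE
  rcases eq_or_ne G.diam 0 with hdiam | hdiam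
  · rw [hdiam, Nat.cast_zero]
    positivity
  have := G.nontrivial_of_diam_ne_zero hdiam
  have hdeg : ∀ x, 0 < G.degree x := fun x => hconn.preconnected.degree_pos_of_nontrivial x
  have hDdeg : ∀ x, G.degree x ≤ D := fun x =>
    hD ▸ Finset.le_sup (f := (G.degree ·)) (Finset.mem_univ x)
  have hD1 : (1 : ℝ) < D := by exact_mod_cast hD2
  have hrow := fun x => G.sum_randomWalk (hdeg x)
  have hπpos := fun x => G.degreeMeasure_pos (hdeg x)
  have hG := fun u v (h : G.Adj u v) => G.inv_le_randomWalk hDdeg h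
  have hmin := fun u v (h : G.randomWalk u v ≠ 0) => hG u v (G.adj_of_randomWalk_ne_zero h)
  obtain ⟨x, y, hxy⟩ := G.exists_dist_eq_diam
  have hf : ∀ u v, G.randomWalk u v ≠ 0 → |(G.dist x v : ℝ) - G.dist x u| ≤ 1 :=
    fun u v h => hconn.abs_dist_sub_dist_le_one (G.adj_of_randomWalk_ne_zero h) x
  have := hGE.sub_le_of_tendsto hκ G.randomWalk_nonneg hπpos hrow G.degreeMeasure_mul_randomWalk
    hD1 hmin hf (hGE.tendsto_heat_sub hκ G.randomWalk_nonneg hπpos hrow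
      G.degreeMeasure_mul_randomWalk hD1 hmin hconn hG hf x y)
  rw [← hxy]
  simpa [mul_div_right_comm] using this
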